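/- Let (λ_i)_{i∈ℕ} be a summable sequence of nonnegative reals with at least one strictly positive term. Suppose 0 < N₁ < N₂ and β₁, β₂ > 0 satisfy Σ_{i=0}^∞ λ_i/(β₁ + N₁·λ_i) = 1 and Σ_{i=0}^∞ λ_i/(β₂ + N₂·λ_i) = 1. Then β₂ < β₁; i.e., the self-consistent parameter β of the NTK generalization formula is strictly decreasing in the number of training samples N. -/

import Mathlib

/-! If `β₂ ≥ β₁` while `N₂ > N₁`, every denominator `β + N λ_i` strictly grows wherever
`λ_i > 0`, so the normalizing sum for `(β₂, N₂)` is strictly smaller than the one for `(β₁, N₁)`;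
both cannot equal `1`. -/

lemma div_add_mul_le_div_add_mul {x b₁ b₂ n₁ n₂ : ℝ} (hx : 0 ≤ x) (hpos : 0 < b₁ + n₁ * x)
    (hb : b₁ ≤ b₂) (hn : n₁ ≤ n₂) : x / (b₂ + n₂ * x) ≤ x / (b₁ + n₁ * x) :=
  div_le_div_of_nonneg_left hx hpos (by gcongr)

lemma div_add_mul_lt_div_add_mul {x b₁ b₂ n₁ n₂ : ℝ} (hx : 0 < x) (hpos : 0 < b₁ + n₁ * x)
    (hb : b₁ ≤ b₂) (hn : n₁ < n₂) : x / (b₂ + n₂ * x) < x / (b₁ + n₁ * x) :=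
  div_lt_div_of_pos_left hx hpos (add_lt_add_of_le_of_lt hb (mul_lt_mul_of_pos_right hn hx))

theorem tsum_div_add_mul_lt_tsum {ι : Type*} {lam : ι → ℝ} (hlam : ∀ i, 0 ≤ lam i)
    (hpos : ∃ i, 0 < lam i) {β₁ β₂ N₁ N₂ : ℝ} (hβ₁ : 0 < β₁) (hβ : β₁ ≤ β₂) (hN₁ : 0 ≤ N₁)
    (hN : N₁ < N₂) (hsum : Summable fun i => lam i / (β₁ + N₁ * lam i)) :
    ∑' i, lam i / (β₂ + N₂ * lam i) < ∑' i, lam i / (β₁ + N₁ * lam i) := by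
  obtain ⟨i₀, hi₀⟩ := hpos
  have hden : ∀ i, 0 < β₁ + N₁ * lam i := fun i =>
    add_pos_of_pos_of_nonneg hβ₁ (mul_nonneg hN₁ (hlam i))
  have hle : ∀ i, lam i / (β₂ + N₂ * lam i) ≤ lam i / (β₁ + N₁ * lam i) := fun i =>
    div_add_mul_le_div_add_mul (hlam i) (hden i) hβ hN.le
  have hden₂ : ∀ i, 0 < β₂ + N₂ * lam i := fun i =>
    (hden i).trans_le (add_le_add hβ (mul_le_mul_of_nonneg_right hN.le (hlam i)))
  have hsum₂ : Summable fun i => lam i / (β₂ + N₂ * lam i) :=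
    hsum.of_nonneg_of_le (fun i => div_nonneg (hlam i) (hden₂ i).le) hle
  exact hsum₂.tsum_lt_tsum hle (div_add_mul_lt_div_add_mul hi₀ (hden i₀) hβ hN) hsum

theorem stmt_14_general (lam : ℕ → ℝ) (hlam : ∀ i, 0 ≤ lam i)
    (hpos : ∃ i, 0 < lam i)
    (N₁ N₂ : ℝ) (hN₁ : 0 < N₁) (hN : N₁ < N₂)
    (β₁ β₂ : ℝ) (hβ₁ : 0 < β₁)
    (hnorm₁ : ∑' i, lam i / (β₁ + N₁ * lam i) = 1)
    (hnorm₂ : ∑' i, lam i / (β₂ + N₂ * lam i) = 1) :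
    β₂ < β₁ := by
  by_contra! hβ
  -- `tsum` of a non-summable family is `0`, so the normalization itself forces summability.
  have hsum : Summable fun i => lam i / (β₁ + N₁ * lam i) := by
    by_contra hns
    rw [tsum_eq_zero_of_not_summable hns] at hnorm₁
    exact zero_ne_one hnorm₁
  have := tsum_div_add_mul_lt_tsum hlam hpos hβ₁ hβ hN₁.le hN hsum
  rw [hnorm₁, hnorm₂] at this
  exact lt_irrefl 1 this

/-- Let `(λ_i)` be a summable sequence of nonnegative reals with at
least one strictly positive term. If `0 < N₁ < N₂` and `β₁, β₂ > 0` satisfy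
`Σ_i λ_i/(β₁ + N₁·λ_i) = 1` and `Σ_i λ_i/(β₂ + N₂·λ_i) = 1`, then `β₂ < β₁`:
the self-consistent parameter `β` is strictly decreasing in the sample size `N`. -/
theorem stmt_14 (lam : ℕ → ℝ) (hlam : ∀ i, 0 ≤ lam i) (hsum : Summable lam)
    (hpos : ∃ i, 0 < lam i)
    (N₁ N₂ : ℝ) (hN₁ : 0 < N₁) (hN : N₁ < N₂)
    (β₁ β₂ : ℝ) (hβ₁ : 0 < β₁) (hβ₂ : 0 < β₂)
    (hnorm₁ : ∑' i, lam i / (β₁ + N₁ * lam i) = 1)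
    (hnorm₂ : ∑' i, lam i / (β₂ + N₂ * lam i) = 1) :
    β₂ < β₁ :=
  stmt_14_general lam hlam hpos N₁ N₂ hN₁ hN β₁ β₂ hβ₁ hnorm₁ hnorm₂
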